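/- Let B be the open unit ball of ℂⁿ for a norm ‖·‖. Then the Carathéodory pseudodistance satisfies c_B(0, z) = arctanh(‖z‖) for all z ∈ B. -/

import Mathlib

open Complex Metric Set

/-- The inverse hyperbolic tangent. -/
noncomputable def arctanh (x : ℝ) : ℝ := (1/2) * Real.log ((1 + x) / (1 - x))

/-- The Poincaré distance on the unit disc (explicit formula). -/
noncomputable def poincareDist (a b : ℂ) : ℝ :=
  arctanh ‖(a - b) / (1 - (starRingEnd ℂ) b * a)‖

/-- The Carathéodory pseudodistance of a domain `D` in a complex normed space. -/
noncomputable def caratheodoryDist {E : Type*} [NormedAddCommGroup E] [NormedSpace ℂ E]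
    (D : Set E) (z w : E) : ℝ :=
  sSup {d : ℝ | ∃ φ : E → ℂ, DifferentiableOn ℂ φ D ∧ MapsTo φ D (ball 0 1) ∧
    d = poincareDist (φ z) (φ w)}

/-!
By the Hahn–Banach theorem there is a linear functional `ℓ` of norm at most one with `ℓ z = ‖z‖`; it maps
the ball into the disc and realises `arctanh ‖z‖`. Conversely, for any holomorphic
`φ : B → Δ`, composing with the disc automorphism sending `φ 0` to `0` and applying the Schwarz
lemma on `B` gives `ω(φ 0, φ z) ≤ arctanh ‖z‖`.
-/

open ComplexConjugate

lemma arctanh_eq_artanh {x : ℝ} (hx : x ∈ Icc (-1) 1) : arctanh x = Real.artanh x :=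
  (Real.artanh_eq_half_log hx).symm

lemma arctanh_le_arctanh {x y : ℝ} (hx : -1 < x) (hy : y < 1) (hxy : x ≤ y) :
    arctanh x ≤ arctanh y := by
  rw [arctanh_eq_artanh ⟨hx.le, hxy.trans hy.le⟩, arctanh_eq_artanh ⟨(hx.trans_le hxy).le, hy.le⟩]
  exact Real.artanh_le_artanh hx hy hxy

noncomputable def mobiusDisc (a w : ℂ) : ℂ := (w - a) / (1 - conj a * w)

lemma poincareDist_eq_arctanh_norm_mobiusDisc (a b : ℂ) :
    poincareDist a b = arctanh ‖mobiusDisc b a‖ := rfl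

@[simp]
lemma mobiusDisc_self (a : ℂ) : mobiusDisc a a = 0 := by
  simp [mobiusDisc]

lemma norm_mobiusDisc_comm (a b : ℂ) : ‖mobiusDisc a b‖ = ‖mobiusDisc b a‖ := by
  rw [mobiusDisc, mobiusDisc, norm_div, norm_div, norm_sub_rev,
    ← Complex.norm_conj (1 - conj a * b)]
  congr 2
  simp only [map_sub, map_one, map_mul, conj_conj]
  ring

lemma normSq_one_sub_conj_mul_sub_normSq_sub (a w : ℂ) :
    normSq (1 - conj a * w) - normSq (w - a) = (1 - normSq a) * (1 - normSq w) := by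
  simp only [normSq_apply, sub_re, sub_im, mul_re, mul_im, conj_re, conj_im, one_re, one_im]
  ring

section UnitDisc

variable {a w : ℂ}

lemma normSq_sub_lt_normSq_one_sub_conj_mul (ha : ‖a‖ < 1) (hw : ‖w‖ < 1) :
    normSq (w - a) < normSq (1 - conj a * w) := by
  have hid := normSq_one_sub_conj_mul_sub_normSq_sub a w
  have ha' : normSq a < 1 := by rw [normSq_eq_norm_sq]; nlinarith [norm_nonneg a]
  have hw' : normSq w < 1 := by rw [normSq_eq_norm_sq]; nlinarith [norm_nonneg w]
  nlinarith

lemma norm_mobiusDisc_lt_one (ha : ‖a‖ < 1) (hw : ‖w‖ < 1) : ‖mobiusDisc a w‖ < 1 := by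
  have h : ‖w - a‖ < ‖1 - conj a * w‖ := by
    simpa only [normSq_eq_norm_sq, sq_lt_sq, abs_norm]
      using normSq_sub_lt_normSq_one_sub_conj_mul ha hw
  rw [mobiusDisc, norm_div, div_lt_one ((norm_nonneg _).trans_lt h)]
  exact h

lemma mapsTo_mobiusDisc (ha : ‖a‖ < 1) : MapsTo (mobiusDisc a) (ball 0 1) (ball 0 1) := fun w hw => by
  rw [mem_ball_zero_iff] at hw ⊢
  exact norm_mobiusDisc_lt_one ha hw

lemma differentiableOn_mobiusDisc (ha : ‖a‖ < 1) : DifferentiableOn ℂ (mobiusDisc a) (ball 0 1) := by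
  refine (differentiableOn_id.sub_const a).div (by fun_prop) fun w hw h => ?_
  have := normSq_sub_lt_normSq_one_sub_conj_mul ha (mem_ball_zero_iff.mp hw)
  rw [h, normSq_zero] at this
  exact (normSq_nonneg _).not_gt this

end UnitDisc

section SchwarzPick

variable {E : Type*} [NormedAddCommGroup E] [NormedSpace ℂ E] {φ : E → ℂ}

lemma norm_mobiusDisc_le_norm_of_mapsTo_ball (hd : DifferentiableOn ℂ φ (ball 0 1))
    (hm : MapsTo φ (ball 0 1) (ball 0 1)) {z : E} (hz : ‖z‖ < 1) :
    ‖mobiusDisc (φ 0) (φ z)‖ ≤ ‖z‖ := by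
  have ha : ‖φ 0‖ < 1 := mem_ball_zero_iff.mp (hm (mem_ball_self one_pos))
  exact Complex.norm_le_norm_of_mapsTo_ball (f := mobiusDisc (φ 0) ∘ φ)
    ((differentiableOn_mobiusDisc ha).comp hd hm)
    (((mapsTo_mobiusDisc ha).comp hm).mono_right ball_subset_closedBall)
    (mobiusDisc_self _) hz

lemma poincareDist_le_arctanh_norm_of_mapsTo_ball (hd : DifferentiableOn ℂ φ (ball 0 1))
    (hm : MapsTo φ (ball 0 1) (ball 0 1)) {z : E} (hz : ‖z‖ < 1) :
    poincareDist (φ 0) (φ z) ≤ arctanh ‖z‖ := by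
  rw [poincareDist_eq_arctanh_norm_mobiusDisc, norm_mobiusDisc_comm]
  exact arctanh_le_arctanh (by linarith [norm_nonneg (mobiusDisc (φ 0) (φ z))]) hz
    (norm_mobiusDisc_le_norm_of_mapsTo_ball hd hm hz)

lemma exists_poincareDist_eq_arctanh_norm (z : E) :
    ∃ φ : E → ℂ, DifferentiableOn ℂ φ (ball 0 1) ∧ MapsTo φ (ball 0 1) (ball 0 1) ∧
      poincareDist (φ 0) (φ z) = arctanh ‖z‖ := by
  obtain ⟨ℓ, hℓ, hℓz⟩ := exists_dual_vector'' ℂ z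
  refine ⟨ℓ, ℓ.differentiable.differentiableOn, fun w hw => ?_, ?_⟩
  · rw [mem_ball_zero_iff] at hw ⊢
    calc ‖ℓ w‖ ≤ ‖ℓ‖ * ‖w‖ := ℓ.le_opNorm w
      _ ≤ 1 * ‖w‖ := by gcongr
      _ < 1 := by rwa [one_mul]
  · simp [poincareDist, hℓz]

end SchwarzPick

theorem caratheodory_dist_unit_ball_from_origin_general
    {E : Type*} [NormedAddCommGroup E] [NormedSpace ℂ E]
    (z : E) (hz : z ∈ ball (0 : E) 1) :
    caratheodoryDist (ball (0 : E) 1) 0 z = arctanh ‖z‖ := by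
  refine IsGreatest.csSup_eq ⟨?_, ?_⟩
  · obtain ⟨φ, hd, hm, h⟩ := exists_poincareDist_eq_arctanh_norm z
    exact ⟨φ, hd, hm, h.symm⟩
  · rintro _ ⟨φ, hd, hm, rfl⟩
    exact poincareDist_le_arctanh_norm_of_mapsTo_ball hd hm (mem_ball_zero_iff.mp hz)

theorem caratheodory_dist_unit_ball_from_origin
    {E : Type*} [NormedAddCommGroup E] [NormedSpace ℂ E] [FiniteDimensional ℂ E]
    (z : E) (hz : z ∈ ball (0 : E) 1) :
    caratheodoryDist (ball (0 : E) 1) 0 z = arctanh ‖z‖ :=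
  caratheodory_dist_unit_ball_from_origin_general z hz
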